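/- Let H₁ and H₂ be ℤ/2-graded Hilbert spaces (or Hilbert C*-modules), let D₁ be an odd self-adjoint Fredholm operator on H₁ and D₂ an odd self-adjoint operator on H₂ with closed range whose kernel is one-dimensional and spanned by an even vector. Let P denote the projection of H₁ ⊗̂ H₂ onto H₁ ⊗̂ ker(D₂). Then the graded tensor product operator D = D₁ ⊗̂ 1 + 1 ⊗̂ D₂ commutes with P, the compression P D P, when identified with an operator on H₁ via H₁ ⊗̂ ker(D₂) ≅ H₁, equals D₁, and hence ind(D) = ind(D₁) + ind(P^⊥ D P^⊥). -/

import Mathlib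

open scoped ComplexInnerProductSpace

variable {H : Type*} [NormedAddCommGroup H] [InnerProductSpace ℂ H] [CompleteSpace H]

/-- The graded index of an odd self-adjoint Fredholm operator `D` on a ℤ/2-graded Hilbert
space with grading operator `γ`:
`ind(D) = dim(ker D ∩ H⁺) - dim(ker D ∩ H⁻)`. -/
noncomputable def grIndex (γ D : H →L[ℂ] H) : ℤ :=
  (Module.finrank ℂ ↥(LinearMap.ker (D : H →ₗ[ℂ] H) ⊓ LinearMap.ker ((γ - 1 : H →L[ℂ] H) : H →ₗ[ℂ] H)) : ℤ) -
    (Module.finrank ℂ ↥(LinearMap.ker (D : H →ₗ[ℂ] H) ⊓ LinearMap.ker ((γ + 1 : H →L[ℂ] H) : H →ₗ[ℂ] H)) : ℤ)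

/-!
Since `D (x ⊗ v) = D₁ x ⊗ v`, the self-adjoint operator `D` preserves `H₁ ⊗ v = ran P`, hence
commutes with `P`. For the index, the point is that `ker D ⊆ H₁ ⊗ v`. Because `D₂` has closed
range it has a partial inverse `S` with `D₂ S = S D₂ = 1 - |v⟩⟨v|`, and the parametrix
`A = γ₁ ⊗ S / 2` satisfies `D A + A D = 1 - P`: the cross terms `D₁ γ₁ + γ₁ D₁` cancel since
`D₁` is odd. So for `u ∈ ker D`, `‖(1 - P) u‖² = ⟪u, (D A + A D) u⟫ = 0`. Thus the correction
terms vanish, and `x ↦ x ⊗ v` maps `ker D₁ ∩ H₁^±` isomorphically onto `ker D ∩ H^±` because `v`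
is even.
-/

open scoped InnerProductSpace TensorProduct

theorem TensorProduct.range_lift_eq_span {R M N P : Type*} [CommSemiring R] [AddCommMonoid M]
    [Module R M] [AddCommMonoid N] [Module R N] [AddCommMonoid P] [Module R P]
    (t : M →ₗ[R] N →ₗ[R] P) :
    LinearMap.range (lift t) = Submodule.span R (Set.range fun p : M × N => t p.1 p.2) := by
  rw [LinearMap.range_eq_map, ← span_tmul_eq_top, Submodule.map_span]
  congr 1
  ext u
  simp

section TensorOperators

variable {𝕜 E₁ E₂ F : Type*} [RCLike 𝕜] [NormedAddCommGroup E₁] [InnerProductSpace 𝕜 E₁]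
  [NormedAddCommGroup E₂] [InnerProductSpace 𝕜 E₂] [NormedAddCommGroup F] [InnerProductSpace 𝕜 F]

theorem TensorProduct.exists_orthonormal_sum_tmul (w : E₁ ⊗[𝕜] E₂) :
    ∃ (n : ℕ) (e : Fin n → E₁) (y : Fin n → E₂), Orthonormal 𝕜 e ∧ w = ∑ i, e i ⊗ₜ y i := by
  obtain ⟨V, _, hw⟩ := exists_finite_submodule_left_of_setFinite {w} (Set.finite_singleton w)
  obtain ⟨w', rfl⟩ := hw rfl
  let b := stdOrthonormalBasis 𝕜 V
  obtain ⟨c, rfl⟩ := eq_repr_basis_left b.toBasis w'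
  refine ⟨_, fun i => (b i : E₁), c, b.orthonormal.comp_linearIsometry V.subtypeₗᵢ, ?_⟩
  simp [Finsupp.sum_fintype, map_sum]

variable {t : E₁ →ₗ[𝕜] E₂ →ₗ[𝕜] F}
  (hinner : ∀ x x' y y', ⟪t x y, t x' y'⟫_𝕜 = ⟪x, x'⟫_𝕜 * ⟪y, y'⟫_𝕜)
include hinner

theorem norm_sq_sum_of_orthonormal {n : ℕ} {e : Fin n → E₁} (he : Orthonormal 𝕜 e)
    (y : Fin n → E₂) : ‖∑ i, t (e i) (y i)‖ ^ 2 = ∑ i, ‖y i‖ ^ 2 := by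
  classical
  have h : ⟪∑ i, t (e i) (y i), ∑ i, t (e i) (y i)⟫_𝕜 = ∑ i, ⟪y i, y i⟫_𝕜 := by
    simp only [sum_inner, inner_sum, hinner, orthonormal_iff_ite.mp he, ite_mul, zero_mul,
      one_mul, Finset.sum_ite_eq', Finset.mem_univ, if_true]
  simp only [inner_self_eq_norm_sq_to_K] at h
  exact_mod_cast h

theorem norm_lift_lTensor_le (T : E₂ →L[𝕜] E₂) (w : E₁ ⊗[𝕜] E₂) :
    ‖TensorProduct.lift t ((T : E₂ →ₗ[𝕜] E₂).lTensor E₁ w)‖ ≤ ‖T‖ * ‖TensorProduct.lift t w‖ := by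
  obtain ⟨n, e, y, he, rfl⟩ := TensorProduct.exists_orthonormal_sum_tmul w
  simp only [map_sum, LinearMap.lTensor_tmul, TensorProduct.lift.tmul, ContinuousLinearMap.coe_coe]
  refine le_of_pow_le_pow_left₀ two_ne_zero (by positivity) ?_
  rw [mul_pow, norm_sq_sum_of_orthonormal hinner he, norm_sq_sum_of_orthonormal hinner he,
    Finset.mul_sum]
  gcongr with i
  rw [← mul_pow]
  exact pow_le_pow_left₀ (norm_nonneg _) (T.le_opNorm _) 2

variable [CompleteSpace F]
  (hdense : Dense (Submodule.span 𝕜 (Set.range fun p : E₁ × E₂ => t p.1 p.2) : Set F))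
include hdense

theorem exists_extension_lTensor (T : E₂ →L[𝕜] E₂) :
    ∃ A : F →L[𝕜] F, ∀ x y, A (t x y) = t x (T y) := by
  have hdr : DenseRange (TensorProduct.lift t) := by
    rwa [DenseRange, ← LinearMap.coe_range, TensorProduct.range_lift_eq_span]
  refine ⟨(TensorProduct.lift t ∘ₗ (T : E₂ →ₗ[𝕜] E₂).lTensor E₁).extendOfNorm
    (TensorProduct.lift t), fun x y => ?_⟩
  exact (LinearMap.extendOfNorm_eq hdr ⟨‖T‖, norm_lift_lTensor_le hinner T⟩ (x ⊗ₜ y)).trans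
    (by simp)

theorem exists_extension_map (T₁ : E₁ →L[𝕜] E₁) (T₂ : E₂ →L[𝕜] E₂) :
    ∃ A : F →L[𝕜] F, ∀ x y, A (t x y) = t (T₁ x) (T₂ y) := by
  obtain ⟨A₂, hA₂⟩ := exists_extension_lTensor hinner hdense T₂
  have hinner_flip : ∀ y y' x x', ⟪t.flip y x, t.flip y' x'⟫_𝕜 = ⟪y, y'⟫_𝕜 * ⟪x, x'⟫_𝕜 :=
    fun y y' x x' => by simp [hinner, mul_comm]
  have hdense_flip :
      Dense (Submodule.span 𝕜 (Set.range fun p : E₂ × E₁ => t.flip p.1 p.2) : Set F) := by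
    convert hdense using 4
    exact (Equiv.prodComm E₂ E₁).surjective.range_comp fun p => t p.1 p.2
  obtain ⟨A₁, hA₁⟩ := exists_extension_lTensor hinner_flip hdense_flip T₁
  exact ⟨A₁ ∘L A₂, fun x y => by simpa [hA₂] using hA₁ (T₂ y) x⟩

end TensorOperators

section UnitVector

variable {𝕜 E₁ E₂ F : Type*} [RCLike 𝕜] [NormedAddCommGroup E₁] [InnerProductSpace 𝕜 E₁]
  [NormedAddCommGroup E₂] [InnerProductSpace 𝕜 E₂] [NormedAddCommGroup F] [InnerProductSpace 𝕜 F]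
  {t : E₁ →ₗ[𝕜] E₂ →ₗ[𝕜] F} (hinner : ∀ x x' y y', ⟪t x y, t x' y'⟫_𝕜 = ⟪x, x'⟫_𝕜 * ⟪y, y'⟫_𝕜)
  {v : E₂} (hv : ‖v‖ = 1)
include hinner hv

theorem inner_flip_apply_flip_apply (x x' : E₁) : ⟪t.flip v x, t.flip v x'⟫_𝕜 = ⟪x, x'⟫_𝕜 := by
  simp [hinner, inner_self_eq_norm_sq_to_K, hv]

theorem injective_flip : Function.Injective (t.flip v) :=
  ((t.flip v).isometryOfInner (inner_flip_apply_flip_apply hinner hv)).injective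

theorem isClosed_range_flip [CompleteSpace E₁] : IsClosed (LinearMap.range (t.flip v) : Set F) :=
  ((t.flip v).isometryOfInner (inner_flip_apply_flip_apply hinner hv)).isometry
    |>.isClosedEmbedding.isClosed_range

theorem closure_span_range_apply_eq_range_flip [CompleteSpace E₁] :
    closure (Submodule.span 𝕜 (Set.range fun x : E₁ => t x v) : Set F) =
      LinearMap.range (t.flip v) := by
  rw [show (Set.range fun x : E₁ => t x v) = LinearMap.range (t.flip v) from rfl,
    Submodule.span_eq, (isClosed_range_flip hinner hv).closure_eq]

theorem starProjection_range_flip_apply [(LinearMap.range (t.flip v)).HasOrthogonalProjection]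
    (x : E₁) (y : E₂) :
    (LinearMap.range (t.flip v)).starProjection (t x y) = ⟪v, y⟫_𝕜 • t x v := by
  apply Submodule.eq_starProjection_of_mem_of_inner_eq_zero
  · exact ⟨⟪v, y⟫_𝕜 • x, by rw [map_smul, LinearMap.flip_apply]⟩
  · rintro _ ⟨x', rfl⟩
    simp [inner_sub_left, inner_smul_left, hinner, inner_self_eq_norm_sq_to_K, hv, mul_comm]

end UnitVector

section HilbertSpace

variable {𝕜 E : Type*} [RCLike 𝕜] [NormedAddCommGroup E] [InnerProductSpace 𝕜 E] [CompleteSpace E]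

theorem IsSelfAdjoint.range_eq_orthogonal_ker {T : E →L[𝕜] E} (hT : IsSelfAdjoint T)
    (hrange : IsClosed (T.range : Set E)) : T.range = T.kerᗮ := by
  have : CompleteSpace T.range := hrange.completeSpace_coe
  rw [← hT.adjoint_eq, ← T.orthogonal_range, Submodule.orthogonal_orthogonal, hT.adjoint_eq]

theorem ContinuousLinearMap.exists_partialInverse {T : E →L[𝕜] E} (hrange : T.range = T.kerᗮ) :
    ∃ S : E →L[𝕜] E, T * S = T.kerᗮ.starProjection ∧ S * T = T.kerᗮ.starProjection := by
  set K := T.kerᗮ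
  have hTK : ∀ y, T y ∈ K := fun y => hrange ▸ LinearMap.mem_range_self (T : E →ₗ[𝕜] E) y
  have hT_proj : ∀ y, T (K.starProjection y) = T y := fun y => by
    have : CompleteSpace T.ker := T.isClosed_ker.completeSpace_coe
    have h := K.sub_starProjection_mem_orthogonal y
    rw [Submodule.orthogonal_orthogonal, LinearMap.mem_ker, map_sub, sub_eq_zero] at h
    exact h.symm
  let f : K →L[𝕜] K := (T ∘L K.subtypeL).codRestrict K fun k => hTK k
  have hf : ∀ k : K, (f k : E) = T k := fun k => rfl
  have hf_inj : f.ker = ⊥ := by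
    refine (Submodule.eq_bot_iff _).mpr fun k hk => Subtype.ext ?_
    have hk' : (k : E) ∈ T.ker ⊓ K :=
      ⟨by simpa [hf] using congrArg Subtype.val (LinearMap.mem_ker.mp hk), k.2⟩
    rwa [Submodule.inf_orthogonal_eq_bot, Submodule.mem_bot] at hk'
  have hf_surj : f.range = ⊤ := by
    refine LinearMap.range_eq_top.mpr fun k => ?_
    obtain ⟨y, hy⟩ : (k : E) ∈ T.range := hrange.symm ▸ k.2
    exact ⟨K.orthogonalProjectionOnto y, Subtype.ext (by simpa [hf, hT_proj] using hy)⟩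
  let e := ContinuousLinearEquiv.ofBijective f hf_inj hf_surj
  refine ⟨K.subtypeL ∘L (e.symm : K →L[𝕜] K) ∘L K.orthogonalProjectionOnto, ?_, ?_⟩
  · ext y
    exact congrArg Subtype.val (e.apply_symm_apply (K.orthogonalProjectionOnto y))
  · ext y
    have : K.orthogonalProjectionOnto (T y) = e (K.orthogonalProjectionOnto y) :=
      Subtype.ext (by simp [e, hf, hT_proj, Submodule.starProjection_eq_self_iff.mpr (hTK y)])
    exact congrArg Subtype.val ((congrArg e.symm this).trans (e.symm_apply_apply _))

theorem IsSelfAdjoint.ker_le_range_of_mul_add_mul_eq_one_sub {D B P : E →L[𝕜] E}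
    (hD : IsSelfAdjoint D) (hP : IsStarProjection P) (h : D * B + B * D = 1 - P) :
    D.ker ≤ P.range := by
  intro u (hu : D u = 0)
  have hQ := hP.one_sub
  have hQu : ⟪u, (1 - P) u⟫_𝕜 = 0 := by
    rw [← h]
    change ⟪u, D (B u) + B (D u)⟫_𝕜 = 0
    rw [inner_add_right, ← ContinuousLinearMap.adjoint_inner_left, hD.adjoint_eq, hu,
      inner_zero_left, map_zero, inner_zero_right, add_zero]
  have hQQ : ⟪(1 - P) u, (1 - P) u⟫_𝕜 = 0 := by
    rw [← ContinuousLinearMap.adjoint_inner_right, hQ.isSelfAdjoint.adjoint_eq]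
    change ⟪u, ((1 - P) * (1 - P)) u⟫_𝕜 = 0
    rw [hQ.isIdempotentElem.eq, hQu]
  have hPu : u - P u = 0 := by simpa using hQQ
  exact ⟨u, (sub_eq_zero.mp hPu).symm⟩

end HilbertSpace

theorem IsSelfAdjoint.commute_of_mul_mul_eq {R : Type*} [Semigroup R] [StarMul R] {a p : R}
    (ha : IsSelfAdjoint a) (hp : IsSelfAdjoint p) (h : p * a * p = a * p) : Commute a p := by
  have h' : p * a * p = p * a := by
    simpa [star_mul, ha.star_eq, hp.star_eq, mul_assoc] using congrArg star h
  exact h.symm.trans h'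

theorem graded_anticommutator_tmul {R M₁ M₂ N : Type*} [CommRing R] [AddCommGroup M₁]
    [Module R M₁] [AddCommGroup M₂] [Module R M₂] [AddCommGroup N] [Module R N]
    {t : M₁ →ₗ[R] M₂ →ₗ[R] N} {γ₁ D₁ : M₁ →ₗ[R] M₁} {D₂ S : M₂ →ₗ[R] M₂} {D A : N →ₗ[R] N}
    (hγ₁ : ∀ x, γ₁ (γ₁ x) = x) (hD₁ : ∀ x, D₁ (γ₁ x) = -γ₁ (D₁ x))
    (hD : ∀ x y, D (t x y) = t (D₁ x) y + t (γ₁ x) (D₂ y))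
    (hA : ∀ x y, A (t x y) = t (γ₁ x) (S y)) (x : M₁) (y : M₂) :
    D (A (t x y)) + A (D (t x y)) = t x (D₂ (S y) + S (D₂ y)) := by
  simp only [hA, hD, map_add, hγ₁, hD₁, map_neg, LinearMap.neg_apply]
  abel

theorem ker_le_range_flip_of_ker_eq_span {𝕜 E₁ E₂ F : Type*} [RCLike 𝕜]
    [NormedAddCommGroup E₁] [InnerProductSpace 𝕜 E₁] [CompleteSpace E₁]
    [NormedAddCommGroup E₂] [InnerProductSpace 𝕜 E₂] [CompleteSpace E₂]
    [NormedAddCommGroup F] [InnerProductSpace 𝕜 F] [CompleteSpace F]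
    {t : E₁ →ₗ[𝕜] E₂ →ₗ[𝕜] F} (hinner : ∀ x x' y y', ⟪t x y, t x' y'⟫_𝕜 = ⟪x, x'⟫_𝕜 * ⟪y, y'⟫_𝕜)
    (hdense : Dense (Submodule.span 𝕜 (Set.range fun p : E₁ × E₂ => t p.1 p.2) : Set F))
    {γ₁ D₁ : E₁ →L[𝕜] E₁} (hγ₁ : ∀ x, γ₁ (γ₁ x) = x) (hD₁ : ∀ x, D₁ (γ₁ x) = -γ₁ (D₁ x))
    {D₂ : E₂ →L[𝕜] E₂} (hD₂ : IsSelfAdjoint D₂) (hD₂range : IsClosed (D₂.range : Set E₂))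
    {v : E₂} (hv : ‖v‖ = 1) (hD₂ker : D₂.ker = 𝕜 ∙ v)
    {D : F →L[𝕜] F} (hDsa : IsSelfAdjoint D)
    (hD : ∀ x y, D (t x y) = t (D₁ x) y + t (γ₁ x) (D₂ y)) :
    D.ker ≤ LinearMap.range (t.flip v) := by
  have : CompleteSpace (LinearMap.range (t.flip v)) :=
    (isClosed_range_flip hinner hv).completeSpace_coe
  obtain ⟨S, hDS, hSD⟩ :=
    ContinuousLinearMap.exists_partialInverse (hD₂.range_eq_orthogonal_ker hD₂range)
  have hproj : ∀ y, D₂.kerᗮ.starProjection y = y - ⟪v, y⟫_𝕜 • v := fun y => by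
    rw [Submodule.starProjection_orthogonal', sub_apply, one_apply_eq_self]
    simp only [hD₂ker, Submodule.starProjection_unit_singleton 𝕜 hv]
  obtain ⟨A, hA⟩ := exists_extension_map hinner hdense γ₁ ((2⁻¹ : 𝕜) • S)
  have hS : ∀ y, D₂ (((2⁻¹ : 𝕜) • S) y) + ((2⁻¹ : 𝕜) • S) (D₂ y) = y - ⟪v, y⟫_𝕜 • v :=
    fun y => by
      rw [smul_apply, smul_apply, map_smul, ← mul_apply_eq_comp D₂ S, ← mul_apply_eq_comp S D₂,
        hDS, hSD, hproj, ← add_smul]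
      norm_num
  refine (Submodule.range_starProjection _).le.trans' <|
    hDsa.ker_le_range_of_mul_add_mul_eq_one_sub isStarProjection_starProjection (B := A) ?_
  refine ContinuousLinearMap.ext_on hdense ?_
  rintro _ ⟨⟨x, y⟩, rfl⟩
  have hanti := graded_anticommutator_tmul (t := t) (γ₁ := γ₁) (D₁ := D₁) (D₂ := D₂)
    (S := ((2⁻¹ : 𝕜) • S : E₂ →L[𝕜] E₂)) (D := D) (A := A) hγ₁ hD₁ hD hA x y
  simp only [ContinuousLinearMap.coe_coe] at hanti
  simp only [add_apply, mul_apply_eq_comp, sub_apply, one_apply_eq_self,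
    starProjection_range_flip_apply hinner hv]
  rw [hanti, hS, map_sub, map_smul]

section LinearAlgebra

variable {R V W : Type*} [Ring R] [AddCommGroup V] [Module R V] [AddCommGroup W] [Module R W]

theorem finrank_ker_inf_ker_eq_of_comp_eq {J : V →ₗ[R] W} (hJ : Function.Injective J)
    {D₁ g₁ : V →ₗ[R] V} {D g : W →ₗ[R] W} (hD : D ∘ₗ J = J ∘ₗ D₁) (hg : g ∘ₗ J = J ∘ₗ g₁)
    (hker : LinearMap.ker D ≤ LinearMap.range J) :
    Module.finrank R ↥(LinearMap.ker D ⊓ LinearMap.ker g)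
      = Module.finrank R ↥(LinearMap.ker D₁ ⊓ LinearMap.ker g₁) := by
  have hcomap : ∀ {T : W →ₗ[R] W} {T₁ : V →ₗ[R] V}, T ∘ₗ J = J ∘ₗ T₁ →
      (LinearMap.ker T).comap J = LinearMap.ker T₁ := fun h => by
    rw [← LinearMap.ker_comp, h, LinearMap.ker_comp_of_ker_eq_bot _ (LinearMap.ker_eq_bot.mpr hJ)]
  have hmap : (LinearMap.ker D₁ ⊓ LinearMap.ker g₁).map J = LinearMap.ker D ⊓ LinearMap.ker g := by
    rw [← hcomap hD, ← hcomap hg, ← Submodule.comap_inf, Submodule.map_comap_eq,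
      inf_eq_right.mpr (inf_le_left.trans hker)]
  rw [← hmap]
  exact (Submodule.equivMapOfInjective J hJ _).finrank_eq.symm

theorem ContinuousLinearMap.IsIdempotentElem.inf_range_one_sub_eq_bot [TopologicalSpace V]
    [IsTopologicalAddGroup V] {P : V →L[R] V} (hP : IsIdempotentElem P) {U : Submodule R V}
    (hU : U ≤ P.range) : U ⊓ (1 - P : V →L[R] V).range = ⊥ := by
  have hP' := ContinuousLinearMap.IsIdempotentElem.toLinearMap hP
  rw [ContinuousLinearMap.toLinearMap_sub, ContinuousLinearMap.toLinearMap_one,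
    ← LinearMap.IsIdempotentElem.ker_eq_range_one_sub hP', eq_bot_iff]
  exact (inf_le_inf_right _ hU).trans (LinearMap.IsIdempotentElem.isCompl hP').disjoint.eq_bot.le

end LinearAlgebra

omit [CompleteSpace H] in
theorem grIndex_eq_of_intertwining {E₁ : Type*} [NormedAddCommGroup E₁] [InnerProductSpace ℂ E₁]
    {J : E₁ →ₗ[ℂ] H} (hJ : Function.Injective J) {γ₁ D₁ : E₁ →L[ℂ] E₁}
    {γ D : H →L[ℂ] H} (hD : ∀ x, D (J x) = J (D₁ x)) (hγ : ∀ x, γ (J x) = J (γ₁ x))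
    (hker : D.ker ≤ LinearMap.range J) : grIndex γ D = grIndex γ₁ D₁ := by
  rw [grIndex, grIndex,
    finrank_ker_inf_ker_eq_of_comp_eq hJ (LinearMap.ext hD) (g₁ := (γ₁ - 1 : E₁ →L[ℂ] E₁))
      (LinearMap.ext fun x => by simp [hγ]) hker,
    finrank_ker_inf_ker_eq_of_comp_eq hJ (LinearMap.ext hD) (g₁ := (γ₁ + 1 : E₁ →L[ℂ] E₁))
      (LinearMap.ext fun x => by simp [hγ]) hker]

theorem graded_tensor_index_decomposition_general
    {H₁ H₂ : Type*} [NormedAddCommGroup H₁] [InnerProductSpace ℂ H₁] [CompleteSpace H₁]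
    [NormedAddCommGroup H₂] [InnerProductSpace ℂ H₂] [CompleteSpace H₂]
    (γ₁ : H₁ →L[ℂ] H₁) (hγ₁2 : γ₁ * γ₁ = 1)
    (γ₂ : H₂ →L[ℂ] H₂)
    (γ : H →L[ℂ] H)
    -- `D₁` : odd self-adjoint Fredholm operator on `H₁`
    (D₁ : H₁ →L[ℂ] H₁) (hD₁odd : γ₁ * D₁ * γ₁ = -D₁)
    -- `D₂` : odd self-adjoint operator on `H₂` with closed range and kernel spanned by the
    -- even unit vector `v`
    (D₂ : H₂ →L[ℂ] H₂) (hD₂sa : IsSelfAdjoint D₂)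
    (hD₂range : IsClosed (LinearMap.range (D₂ : H₂ →ₗ[ℂ] H₂) : Set H₂))
    (v : H₂) (hv : ‖v‖ = 1) (hvker : LinearMap.ker (D₂ : H₂ →ₗ[ℂ] H₂) = Submodule.span ℂ {v})
    (hveven : γ₂ v = v)
    -- `t` realizes `H` as the graded tensor product `H₁ ⊗̂ H₂`
    (t : H₁ →ₗ[ℂ] H₂ →ₗ[ℂ] H)
    (hinner : ∀ (x x' : H₁) (y y' : H₂), ⟪t x y, t x' y'⟫ = ⟪x, x'⟫ * ⟪y, y'⟫)
    (hdense : Dense (↑(Submodule.span ℂ (Set.range fun p : H₁ × H₂ => t p.1 p.2)) : Set H))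
    (hgrading : ∀ (x : H₁) (y : H₂), γ (t x y) = t (γ₁ x) (γ₂ y))
    -- `P` : the orthogonal projection onto `H₁ ⊗̂ ker D₂`
    (P : H →L[ℂ] H) (hPsa : IsSelfAdjoint P) (hPidem : P * P = P)
    (hPrange : (LinearMap.range (P : H →ₗ[ℂ] H) : Set H)
      = closure (↑(Submodule.span ℂ (Set.range fun x : H₁ => t x v)) : Set H))
    -- `D = D₁ ⊗̂ 1 + 1 ⊗̂ D₂`
    (D : H →L[ℂ] H) (hDsa : IsSelfAdjoint D)
    (hD : ∀ (x : H₁) (y : H₂), D (t x y) = t (D₁ x) y + t (γ₁ x) (D₂ y)) :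
    D * P = P * D ∧
    (∀ x : H₁, D (t x v) = t (D₁ x) v) ∧
    grIndex γ D = grIndex γ₁ D₁ +
      ((Module.finrank ℂ
          ↥(LinearMap.ker (D : H →ₗ[ℂ] H) ⊓ LinearMap.ker ((γ - 1 : H →L[ℂ] H) : H →ₗ[ℂ] H) ⊓ LinearMap.range ((1 - P : H →L[ℂ] H) : H →ₗ[ℂ] H)) : ℤ) -
        (Module.finrank ℂ
          ↥(LinearMap.ker (D : H →ₗ[ℂ] H) ⊓ LinearMap.ker ((γ + 1 : H →L[ℂ] H) : H →ₗ[ℂ] H) ⊓ LinearMap.range ((1 - P : H →L[ℂ] H) : H →ₗ[ℂ] H)) : ℤ)) := by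
  have hγ₁ : ∀ x, γ₁ (γ₁ x) = x := fun x => by simpa using DFunLike.congr_fun hγ₁2 x
  have hD₁anti : ∀ x, D₁ (γ₁ x) = -γ₁ (D₁ x) := fun x => by
    simpa [hγ₁] using congrArg γ₁ (DFunLike.congr_fun hD₁odd x)
  have hD₂v : D₂ v = 0 := (hvker ▸ Submodule.mem_span_singleton_self v :
    v ∈ LinearMap.ker (D₂ : H₂ →ₗ[ℂ] H₂))
  have hDv : ∀ x, D (t x v) = t (D₁ x) v := fun x => by rw [hD, hD₂v, map_zero, add_zero]
  have hrange : P.range = LinearMap.range (t.flip v) :=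
    SetLike.coe_injective (hPrange.trans (closure_span_range_apply_eq_range_flip hinner hv))
  have hker : D.ker ≤ LinearMap.range (t.flip v) :=
    ker_le_range_flip_of_ker_eq_span hinner hdense hγ₁ hD₁anti hD₂sa hD₂range hv hvker hDsa hD
  refine ⟨(hDsa.commute_of_mul_mul_eq hPsa
    ((ContinuousLinearMap.IsIdempotentElem.range_mem_invtSubmodule_iff hPidem).mp ?_)).eq, hDv, ?_⟩
  · rw [Module.End.mem_invtSubmodule_iff_forall_mem_of_mem, hrange]
    rintro _ ⟨x, rfl⟩
    exact ⟨D₁ x, (hDv x).symm⟩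
  · have hcorr : ∀ g : H →L[ℂ] H, D.ker ⊓ g.ker ⊓ (1 - P : H →L[ℂ] H).range = ⊥ := fun g =>
      ContinuousLinearMap.IsIdempotentElem.inf_range_one_sub_eq_bot hPidem
        (inf_le_left.trans (hrange ▸ hker))
    rw [hcorr, hcorr, grIndex_eq_of_intertwining (γ₁ := γ₁) (injective_flip hinner hv) hDv
      (fun x => by simp [hgrading, hveven]) hker]
    simp

/-- Let `H₁, H₂` be ℤ/2-graded Hilbert spaces (with gradings `γ₁, γ₂`), `D₁` an
odd self-adjoint Fredholm operator on `H₁`, `D₂` an odd self-adjoint operator on `H₂` with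
closed range and one-dimensional kernel spanned by an even unit vector `v`.  Let
`H = H₁ ⊗̂ H₂` (with structure map `t`, grading `γ`), let `P` be the orthogonal projection of
`H` onto `H₁ ⊗̂ ker(D₂)`, and let `D = D₁ ⊗̂ 1 + 1 ⊗̂ D₂`.  Then `D` commutes with `P`, the
compression `PDP` equals `D₁` under the identification `H₁ ⊗̂ ker(D₂) ≅ H₁`, and hence
`ind(D) = ind(D₁) + ind(P⊥ D P⊥)`. -/
theorem graded_tensor_index_decomposition
    {H₁ H₂ : Type*} [NormedAddCommGroup H₁] [InnerProductSpace ℂ H₁] [CompleteSpace H₁]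
    [NormedAddCommGroup H₂] [InnerProductSpace ℂ H₂] [CompleteSpace H₂]
    (γ₁ : H₁ →L[ℂ] H₁) (hγ₁sa : IsSelfAdjoint γ₁) (hγ₁2 : γ₁ * γ₁ = 1)
    (γ₂ : H₂ →L[ℂ] H₂) (hγ₂sa : IsSelfAdjoint γ₂) (hγ₂2 : γ₂ * γ₂ = 1)
    (γ : H →L[ℂ] H) (hγsa : IsSelfAdjoint γ) (hγ2 : γ * γ = 1)
    -- `D₁` : odd self-adjoint Fredholm operator on `H₁`
    (D₁ : H₁ →L[ℂ] H₁) (hD₁sa : IsSelfAdjoint D₁) (hD₁odd : γ₁ * D₁ * γ₁ = -D₁)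
    (hD₁ker : FiniteDimensional ℂ ↥(LinearMap.ker (D₁ : H₁ →ₗ[ℂ] H₁)))
    (hD₁range : IsClosed (LinearMap.range (D₁ : H₁ →ₗ[ℂ] H₁) : Set H₁))
    -- `D₂` : odd self-adjoint operator on `H₂` with closed range and kernel spanned by the
    -- even unit vector `v`
    (D₂ : H₂ →L[ℂ] H₂) (hD₂sa : IsSelfAdjoint D₂) (hD₂odd : γ₂ * D₂ * γ₂ = -D₂)
    (hD₂range : IsClosed (LinearMap.range (D₂ : H₂ →ₗ[ℂ] H₂) : Set H₂))
    (v : H₂) (hv : ‖v‖ = 1) (hvker : LinearMap.ker (D₂ : H₂ →ₗ[ℂ] H₂) = Submodule.span ℂ {v})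
    (hveven : γ₂ v = v)
    -- `t` realizes `H` as the graded tensor product `H₁ ⊗̂ H₂`
    (t : H₁ →ₗ[ℂ] H₂ →ₗ[ℂ] H)
    (hinner : ∀ (x x' : H₁) (y y' : H₂), ⟪t x y, t x' y'⟫ = ⟪x, x'⟫ * ⟪y, y'⟫)
    (hdense : Dense (↑(Submodule.span ℂ (Set.range fun p : H₁ × H₂ => t p.1 p.2)) : Set H))
    (hgrading : ∀ (x : H₁) (y : H₂), γ (t x y) = t (γ₁ x) (γ₂ y))
    -- `P` : the orthogonal projection onto `H₁ ⊗̂ ker D₂`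
    (P : H →L[ℂ] H) (hPsa : IsSelfAdjoint P) (hPidem : P * P = P)
    (hPrange : (LinearMap.range (P : H →ₗ[ℂ] H) : Set H)
      = closure (↑(Submodule.span ℂ (Set.range fun x : H₁ => t x v)) : Set H))
    -- `D = D₁ ⊗̂ 1 + 1 ⊗̂ D₂`
    (D : H →L[ℂ] H) (hDsa : IsSelfAdjoint D)
    (hD : ∀ (x : H₁) (y : H₂), D (t x y) = t (D₁ x) y + t (γ₁ x) (D₂ y)) :
    D * P = P * D ∧
    (∀ x : H₁, D (t x v) = t (D₁ x) v) ∧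
    grIndex γ D = grIndex γ₁ D₁ +
      ((Module.finrank ℂ
          ↥(LinearMap.ker (D : H →ₗ[ℂ] H) ⊓ LinearMap.ker ((γ - 1 : H →L[ℂ] H) : H →ₗ[ℂ] H) ⊓ LinearMap.range ((1 - P : H →L[ℂ] H) : H →ₗ[ℂ] H)) : ℤ) -
        (Module.finrank ℂ
          ↥(LinearMap.ker (D : H →ₗ[ℂ] H) ⊓ LinearMap.ker ((γ + 1 : H →L[ℂ] H) : H →ₗ[ℂ] H) ⊓ LinearMap.range ((1 - P : H →L[ℂ] H) : H →ₗ[ℂ] H)) : ℤ)) :=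
  graded_tensor_index_decomposition_general γ₁ hγ₁2 γ₂ γ D₁ hD₁odd D₂ hD₂sa hD₂range v hv hvker
    hveven t hinner hdense hgrading P hPsa hPidem hPrange D hDsa hD
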